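/- Fix a bidder i, fix the bids b_{−i} of all bidders other than i, and fix an allocation x. If x is efficient under both (b_i, b_{−i}) and (b'_i, b_{−i}), then x is efficient under (b''_i, b_{−i}), where b''_i is the pointwise minimum, b''_i(K) = min(b_i(K), b'_i(K)) for every bundle K ⊆ M. -/
import Mathlib


open Finset

variable {M N : Type*}

/-- An allocation assigns to each bidder a subset of the goods, pairwise disjoint. -/
def IsAlloc (x : N → Finset M) : Prop :=
  ∀ i j, i ≠ j → Disjoint (x i) (x j)

/-- An allocation is efficient under `b` if it maximizes reported social welfare. -/
def Efficient [Fintype N] (b : N → Finset M → ℝ) (x : N → Finset M) : Prop :=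
  IsAlloc x ∧ ∀ y, IsAlloc y → ∑ j, b j (y j) ≤ ∑ j, b j (x j)

/-- If `x` is efficient both when bidder `i` bids `bi` and when he bids `bi'`
(opponent bids fixed), then `x` is efficient when he bids the pointwise minimum
of `bi` and `bi'`. -/
theorem stmt_12 [Fintype M] [Fintype N] [DecidableEq N]
    (b : N → Finset M → ℝ) (i : N) (x : N → Finset M)
    (bi bi' : Finset M → ℝ)
    (h : Efficient (Function.update b i bi) x)
    (h' : Efficient (Function.update b i bi') x) :
    Efficient (Function.update b i (fun K => min (bi K) (bi' K))) x := by
  obtain ⟨hx, hmax⟩ := h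
  obtain ⟨-, hmax'⟩ := h'
  have key : ∀ (g : Finset M → ℝ) (z : N → Finset M),
      ∑ j, Function.update b i g j (z j)
        = g (z i) + ∑ j ∈ univ.erase i, b j (z j) := by
    intro g z
    rw [← Finset.add_sum_erase _ _ (mem_univ i), Function.update_self]
    congr 1
    exact Finset.sum_congr rfl fun j hj =>
      congrFun (Function.update_of_ne (mem_erase.mp hj).1 _ _) _
  refine ⟨hx, fun y hy => ?_⟩
  rw [key, key]
  rcases min_le_iff.mp (le_refl (min (bi (x i)) (bi' (x i)))) with hc | hc
  · -- min at x i equals bi (x i) case handled via bi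
    have h1 := hmax y hy
    rw [key, key] at h1
    have : min (bi (y i)) (bi' (y i)) ≤ bi (y i) := min_le_left _ _
    rcases le_total (bi (x i)) (bi' (x i)) with hle | hle
    · rw [min_eq_left hle]; linarith
    · rw [min_eq_right hle]
      have h2 := hmax' y hy
      rw [key, key] at h2
      have : min (bi (y i)) (bi' (y i)) ≤ bi' (y i) := min_le_right _ _
      linarith
  · rcases le_total (bi (x i)) (bi' (x i)) with hle | hle
    · rw [min_eq_left hle]
      have h1 := hmax y hy
      rw [key, key] at h1
      have : min (bi (y i)) (bi' (y i)) ≤ bi (y i) := min_le_left _ _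
      linarith
    · rw [min_eq_right hle]
      have h2 := hmax' y hy
      rw [key, key] at h2
      have : min (bi (y i)) (bi' (y i)) ≤ bi' (y i) := min_le_right _ _
      linarith
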